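/- Let X₁, …, Xₙ be independent random variables each with the SN(1) distribution. Then X₍ₙ₎ = max{X₁, …, Xₙ} has the Balakrishnan skew-normal distribution SNB_{2n−1}(1): the law of the maximum has density x ↦ 2n φ(x) Φ(x)^{2n−1} with respect to Lebesgue measure. -/

import Mathlib

/-!
The event `{max Xᵢ ≤ a}` is the intersection of the independent events `{Xᵢ ≤ a}`, so the cdf of
the maximum is the product of the marginal cdfs. The `SN(1)` density `2 φ Φ` is the derivative
of `Φ²`, so each factor is `Φ(a)²` and the product is `Φ(a)^{2n}`, whose derivative is the claimed
density `2n φ Φ^{2n-1}`. A finite measure on `ℝ` is determined by its cdf.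
-/

open MeasureTheory

/-- Standard normal density. -/
noncomputable def normPdf (x : ℝ) : ℝ := Real.exp (-x ^ 2 / 2) / Real.sqrt (2 * Real.pi)

/-- Standard normal cdf. -/
noncomputable def normCdf (x : ℝ) : ℝ := ∫ t in Set.Iic x, normPdf t

/-- Skew-normal cdf with parameter `l`. -/
noncomputable def snCdf (l z : ℝ) : ℝ := ∫ t in Set.Iic z, 2 * normPdf t * normCdf (l * t)

/-- The skew-normal measure `SN(l)`: density `x ↦ 2 φ(x) Φ(l x)`. -/
noncomputable def snMeasure (l : ℝ) : Measure ℝ :=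
  volume.withDensity fun x => ENNReal.ofReal (2 * normPdf x * normCdf (l * x))

/-- The Beta function. -/
noncomputable def betaFn (a b : ℝ) : ℝ := Real.Gamma a * Real.Gamma b / Real.Gamma (a + b)

open ProbabilityTheory Set Filter Topology

theorem ProbabilityTheory.iIndepFun.map_sup'_Iic {Ω ι α : Type*} [MeasurableSpace Ω]
    {μ : Measure Ω} [Fintype ι] [LinearOrder α] [MeasurableSpace α] [TopologicalSpace α]
    [OrderClosedTopology α] [OpensMeasurableSpace α] [MeasurableSup₂ α] {X : ι → Ω → α}
    (hX : iIndepFun X μ) (hmeas : ∀ i, Measurable (X i)) (hne : (Finset.univ : Finset ι).Nonempty)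
    (a : α) :
    μ.map (fun ω => Finset.univ.sup' hne fun i => X i ω) (Iic a) = ∏ i, μ.map (X i) (Iic a) := by
  have hsup : Measurable fun ω => Finset.univ.sup' hne fun i => X i ω := by
    simpa only [← Finset.sup'_apply] using Finset.measurable_sup' hne fun i _ => hmeas i
  have hpre : (fun ω => Finset.univ.sup' hne fun i => X i ω) ⁻¹' Iic a = ⋂ i, X i ⁻¹' Iic a := by
    ext ω
    simp [Finset.sup'_le_iff]
  rw [Measure.map_apply hsup measurableSet_Iic, hpre,
    hX.meas_iInter fun i => ⟨Iic a, measurableSet_Iic, rfl⟩]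
  simp only [Measure.map_apply (hmeas _) measurableSet_Iic]

theorem hasDerivAt_integral_Iic {f : ℝ → ℝ} (hf : Integrable f) (hcont : Continuous f) (x : ℝ) :
    HasDerivAt (fun y => ∫ t in Iic y, f t) (f x) x := by
  have hsplit : ∀ y, ∫ t in Iic y, f t = (∫ t in Iic 0, f t) + ∫ t in (0 : ℝ)..y, f t := fun y => by
    rw [← intervalIntegral.integral_Iic_sub_Iic hf.integrableOn hf.integrableOn]
    ring
  rw [funext hsplit]
  exact (intervalIntegral.integral_hasDerivAt_right hf.intervalIntegrable
    hcont.stronglyMeasurable.stronglyMeasurableAtFilter hcont.continuousAt).const_add _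

theorem normPdf_eq_gaussianPDFReal : normPdf = gaussianPDFReal 0 1 := by
  ext x
  simp [normPdf, gaussianPDFReal, div_eq_inv_mul]

theorem normCdf_eq_cdf_gaussianReal : normCdf = cdf (gaussianReal 0 1) := by
  ext x
  rw [cdf_eq_real, measureReal_def, gaussianReal_apply_eq_integral _ one_ne_zero,
    ENNReal.toReal_ofReal
      (setIntegral_nonneg measurableSet_Iic fun t _ => gaussianPDFReal_nonneg _ _ _),
    normCdf, normPdf_eq_gaussianPDFReal]

theorem normPdf_nonneg (x : ℝ) : 0 ≤ normPdf x :=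
  normPdf_eq_gaussianPDFReal ▸ gaussianPDFReal_nonneg 0 1 x

theorem integrable_normPdf : Integrable normPdf :=
  normPdf_eq_gaussianPDFReal ▸ integrable_gaussianPDFReal 0 1

@[fun_prop]
theorem continuous_normPdf : Continuous normPdf := by
  unfold normPdf
  fun_prop

theorem normCdf_nonneg (x : ℝ) : 0 ≤ normCdf x :=
  normCdf_eq_cdf_gaussianReal ▸ cdf_nonneg _ x

theorem normCdf_le_one (x : ℝ) : normCdf x ≤ 1 :=
  normCdf_eq_cdf_gaussianReal ▸ cdf_le_one _ x

theorem tendsto_normCdf_atBot : Tendsto normCdf atBot (𝓝 0) :=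
  normCdf_eq_cdf_gaussianReal ▸ tendsto_cdf_atBot _

theorem hasDerivAt_normCdf (x : ℝ) : HasDerivAt normCdf (normPdf x) x :=
  hasDerivAt_integral_Iic integrable_normPdf continuous_normPdf x

@[fun_prop]
theorem continuous_normCdf : Continuous normCdf :=
  continuous_iff_continuousAt.2 fun x => (hasDerivAt_normCdf x).continuousAt

theorem integrable_normPdf_mul_normCdf_pow (c : ℝ) (k : ℕ) :
    Integrable fun t => c * normPdf t * normCdf t ^ k := by
  refine (integrable_normPdf.const_mul c).mono (by fun_prop) (ae_of_all _ fun t => ?_)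
  rw [norm_mul _ (normCdf t ^ k), norm_pow, Real.norm_of_nonneg (normCdf_nonneg t)]
  exact mul_le_of_le_one_right (norm_nonneg _) (pow_le_one₀ (normCdf_nonneg t) (normCdf_le_one t))

theorem integral_Iic_normPdf_mul_normCdf_pow (m : ℕ) (a : ℝ) :
    ∫ t in Iic a, (m + 1 : ℝ) * normPdf t * normCdf t ^ m = normCdf a ^ (m + 1) := by
  have hderiv (t : ℝ) : HasDerivAt (fun y => normCdf y ^ (m + 1))
      ((m + 1 : ℝ) * normPdf t * normCdf t ^ m) t :=
    ((hasDerivAt_normCdf t).pow (m + 1)).congr_deriv (by rw [Nat.add_sub_cancel]; push_cast; ring)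
  have hbot : Tendsto (fun y => normCdf y ^ (m + 1)) atBot (𝓝 0) := by
    simpa using tendsto_normCdf_atBot.pow (m + 1)
  rw [integral_Iic_of_hasDerivAt_of_tendsto' (fun t _ => hderiv t)
    (integrable_normPdf_mul_normCdf_pow _ m).integrableOn hbot, sub_zero]

noncomputable def snbMeasure (m : ℕ) : Measure ℝ :=
  volume.withDensity fun x => ENNReal.ofReal ((m + 1 : ℝ) * normPdf x * normCdf x ^ m)

theorem snbMeasure_Iic (m : ℕ) (a : ℝ) :
    snbMeasure m (Iic a) = ENNReal.ofReal (normCdf a ^ (m + 1)) := by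
  rw [snbMeasure, withDensity_apply _ measurableSet_Iic,
    ← ofReal_integral_eq_lintegral_ofReal (integrable_normPdf_mul_normCdf_pow _ m).integrableOn
      (ae_of_all _ fun t => by have := normPdf_nonneg t; have := normCdf_nonneg t; positivity),
    integral_Iic_normPdf_mul_normCdf_pow]

theorem snMeasure_one_eq_snbMeasure_one : snMeasure 1 = snbMeasure 1 := by
  simp only [snMeasure, snbMeasure, one_mul, pow_one]
  norm_num

/-- The maximum of an i.i.d. sample of size `n` from `SN(1)` has the Balakrishnan
skew-normal distribution `SNB_{2n-1}(1)`, with density `x ↦ 2n φ(x) Φ(x)^{2n-1}`. -/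
theorem sn_max_snb {Ω : Type*} [MeasurableSpace Ω] (μ : Measure Ω)
    [IsProbabilityMeasure μ] (n : ℕ) (hn : 0 < n) (X : Fin n → Ω → ℝ)
    (hmeas : ∀ i, Measurable (X i))
    (hlaw : ∀ i, Measure.map (X i) μ = snMeasure 1)
    (hindep : ProbabilityTheory.iIndepFun X μ) :
    Measure.map
        (fun ω => Finset.univ.sup'
          (Finset.univ_nonempty_iff.mpr (Fin.pos_iff_nonempty.mp hn))
          fun i => X i ω) μ =
      volume.withDensity fun x =>
        ENNReal.ofReal ((2 * n : ℝ) * normPdf x * normCdf x ^ (2 * n - 1)) := by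
  have hdeg : (2 * n : ℝ) = ((2 * n - 1 : ℕ) : ℝ) + 1 := by
    rw [Nat.cast_sub (by omega)]
    push_cast
    ring
  rw [hdeg]
  change _ = snbMeasure (2 * n - 1)
  have : IsProbabilityMeasure (μ.map fun ω => Finset.univ.sup'
      (Finset.univ_nonempty_iff.mpr (Fin.pos_iff_nonempty.mp hn)) fun i => X i ω) :=
    Measure.isProbabilityMeasure_map (by fun_prop)
  refine Measure.ext_of_Iic _ _ fun a => ?_
  rw [hindep.map_sup'_Iic hmeas, snbMeasure_Iic, Nat.sub_add_cancel (by omega)]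
  simp only [hlaw, snMeasure_one_eq_snbMeasure_one, snbMeasure_Iic, Finset.prod_const,
    Finset.card_univ, Fintype.card_fin]
  rw [← ENNReal.ofReal_pow (by have := normCdf_nonneg a; positivity), ← pow_mul]
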